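/- Let m be a positive integer and let α be a real algebraic integer greater than 1 of degree 2m whose minimal polynomial over ℚ is g(X^m), where g(X) = X² − uX − v with u, v integers and v ≠ 0, and assume that every Galois conjugate of α other than α itself lies in the open unit disc of ℂ. Then there exists a positive integer n₀ such that for every positive integer n ≥ n₀ that is a multiple of m, one has ‖α^n‖ = |v|^(n/m) · α^(−n). -/

import Mathlib

/-!
Put `β = α ^ m`, a root of `g = X² - uX - v`, and let `γ = u - β` be the other root. Every
`m`-th root `z` of `γ` is a root of `g(X^m)`, i.e. a conjugate of `α`, and `z ≠ α` because `β`
is irrational (`α` has degree `2m > m`); so `|γ| = |z|^m < 1`. The power sums `β^k + γ^k` are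
integers, hence once `|γ|^k < 1/2` the distance from `α^(mk) = β^k` to the nearest integer is
`|γ|^k = (|v| / β)^k`, using `βγ = -v`.
-/

open Polynomial Filter

/-- The distance from a real number to the nearest integer:
`‖x‖ = min { |x - m| : m ∈ ℤ }`. -/
noncomputable def distToNearestInt (x : ℝ) : ℝ := |x - round x|

theorem distToNearestInt_intCast_sub (N : ℤ) {x : ℝ} (hx : |x| < 1 / 2) :
    distToNearestInt (N - x) = |x| := by
  have hround : round ((N : ℝ) - x) = N := by
    obtain ⟨hlo, hhi⟩ := abs_lt.mp hx
    rw [sub_eq_add_neg, round_intCast_add, round_eq_zero_iff.mpr ⟨by linarith, by linarith⟩,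
      add_zero]
  rw [distToNearestInt, hround, sub_sub_cancel_left, abs_neg]

theorem exists_intCast_eq_pow_add_pow {R : Type*} [CommRing R] {β γ : R} {u v : ℤ}
    (hsum : β + γ = u) (hprod : β * γ = -v) (k : ℕ) : ∃ N : ℤ, β ^ k + γ ^ k = N := by
  induction k using Nat.twoStepInduction with
  | zero => exact ⟨2, by norm_num [one_add_one_eq_two]⟩
  | one => exact ⟨u, by simpa using hsum⟩
  | more k ih₀ ih₁ =>
    obtain ⟨N₀, hN₀⟩ := ih₀
    obtain ⟨N₁, hN₁⟩ := ih₁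
    refine ⟨u * N₁ + v * N₀, ?_⟩
    push_cast
    linear_combination (β ^ (k + 1) + γ ^ (k + 1)) * hsum - (β ^ k + γ ^ k) * hprod
      + (u : R) * hN₁ + (v : R) * hN₀

theorem eventually_distToNearestInt_pow_eq {β γ : ℝ} {u v : ℤ} (hsum : β + γ = u)
    (hprod : β * γ = -v) (hγ : |γ| < 1) :
    ∀ᶠ k in atTop, distToNearestInt (β ^ k) = |γ| ^ k := by
  have hsmall : ∀ᶠ k in atTop, |γ| ^ k < 1 / 2 :=
    (tendsto_pow_atTop_nhds_zero_of_lt_one (abs_nonneg γ) hγ).eventually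
      (gt_mem_nhds one_half_pos)
  filter_upwards [hsmall] with k hk
  obtain ⟨N, hN⟩ := exists_intCast_eq_pow_add_pow hsum hprod k
  rw [eq_sub_of_add_eq hN, distToNearestInt_intCast_sub N (by rwa [abs_pow]), abs_pow]

theorem pow_ne_algebraMap_of_lt_natDegree_minpoly {K L : Type*} [Field K] [Ring L]
    [Algebra K L] {x : L} {m : ℕ} (hm : m ≠ 0) (hdeg : m < (minpoly K x).natDegree) (c : K) :
    x ^ m ≠ algebraMap K L c := by
  intro hx
  have hroot : aeval x (X ^ m - C c) = 0 := by simp [hx]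
  have hle := minpoly.min K x (monic_X_pow_sub_C c hm) hroot
  rw [degree_X_pow_sub_C (Nat.pos_of_ne_zero hm)] at hle
  exact hdeg.not_ge (natDegree_le_iff_degree_le.mpr hle)

theorem norm_lt_one_of_aeval_eq_zero_of_comp_X_pow {R : Type*} [CommSemiring R] [Algebra R ℂ]
    {g : R[X]} {m : ℕ} (hm : m ≠ 0) {α : ℂ}
    (hconj : ∀ z : ℂ, aeval z (g.comp (X ^ m)) = 0 → z ≠ α → ‖z‖ < 1)
    {w : ℂ} (hw : aeval w g = 0) (hwα : w ≠ α ^ m) : ‖w‖ < 1 := by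
  obtain ⟨z, rfl⟩ := IsAlgClosed.exists_pow_nat_eq w (Nat.pos_of_ne_zero hm)
  have hz : ‖z‖ < 1 := hconj z (by simpa [aeval_comp] using hw) (by rintro rfl; exact hwα rfl)
  rw [norm_pow]
  exact pow_lt_one₀ (norm_nonneg z) hz hm

theorem pisot_from_quadratic_fractional_parts_general (m : ℕ) (hm : 0 < m)
    (α : ℝ) (hα1 : 1 < α)
    (u v : ℤ)
    (hminpoly : minpoly ℚ α =
      (Polynomial.X ^ 2 - Polynomial.C (u : ℚ) * Polynomial.X - Polynomial.C (v : ℚ)).comp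
        (Polynomial.X ^ m))
    (hdeg : (minpoly ℚ α).natDegree = 2 * m)
    (hconj : ∀ z : ℂ, Polynomial.aeval z (minpoly ℚ α) = 0 → z ≠ (α : ℂ) →
      ‖z‖ < 1) :
    ∃ n₀ : ℕ, 0 < n₀ ∧ ∀ n : ℕ, n₀ ≤ n → m ∣ n →
      distToNearestInt (α ^ n) = (|v| : ℝ) ^ (n / m) * α ^ (-(n : ℤ)) := by
  set β := α ^ m
  set γ := (u : ℝ) - β
  have hβroot : β ^ 2 - u * β - v = 0 := by
    simpa [hminpoly, aeval_comp] using minpoly.aeval ℚ α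
  have hprod : β * γ = -v := by linear_combination -hβroot
  have hβγ : β ≠ γ := fun h ↦ pow_ne_algebraMap_of_lt_natDegree_minpoly hm.ne'
    (by omega : m < (minpoly ℚ α).natDegree) ((u : ℚ) / 2) (by rw [eq_ratCast]; push_cast; linarith)
  have hγ : |γ| < 1 := by
    have hγroot : aeval (γ : ℂ) (X ^ 2 - C (u : ℚ) * X - C (v : ℚ)) = 0 := by
      simp only [map_sub, map_mul, map_pow, aeval_X, aeval_C, eq_ratCast, Rat.cast_intCast]
      exact_mod_cast (by linear_combination hβroot : γ ^ 2 - u * γ - v = 0)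
    have hγβ : (γ : ℂ) ≠ (α : ℂ) ^ m := by exact_mod_cast hβγ.symm
    simpa using norm_lt_one_of_aeval_eq_zero_of_comp_X_pow hm.ne' (hminpoly ▸ hconj) hγroot hγβ
  obtain ⟨K, hK⟩ := eventually_atTop.mp
    (eventually_distToNearestInt_pow_eq (add_sub_cancel β u) hprod hγ)
  refine ⟨m * (K + 1), by positivity, ?_⟩
  rintro _ hn ⟨k, rfl⟩
  have hkK : K ≤ k := by have := Nat.le_of_mul_le_mul_left hn hm; omega
  have hγabs : |γ| = |(v : ℝ)| / β := by
    rw [eq_div_iff (by positivity), ← abs_of_pos (by positivity : 0 < β), ← abs_mul, mul_comm,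
      hprod, abs_neg]
  rw [pow_mul, hK k hkK, hγabs, div_pow, Nat.mul_div_cancel_left k hm, zpow_neg, zpow_natCast,
    pow_mul, div_eq_mul_inv]

/-- Let `m ≥ 1` and let `α > 1` be a real algebraic integer of degree `2m` whose minimal
polynomial over `ℚ` is `g(X^m)` with `g(X) = X² - uX - v`, `u, v` integers, `v ≠ 0`,
and all of whose Galois conjugates other than `α` lie in the open unit disc. Then for
all sufficiently large `n` divisible by `m`, `‖α^n‖ = |v|^(n/m) · α^(-n)`. -/
theorem pisot_from_quadratic_fractional_parts (m : ℕ) (hm : 0 < m)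
    (α : ℝ) (hα1 : 1 < α) (hint : IsIntegral ℤ α)
    (u v : ℤ) (hv : v ≠ 0)
    (hminpoly : minpoly ℚ α =
      (Polynomial.X ^ 2 - Polynomial.C (u : ℚ) * Polynomial.X - Polynomial.C (v : ℚ)).comp
        (Polynomial.X ^ m))
    (hdeg : (minpoly ℚ α).natDegree = 2 * m)
    (hconj : ∀ z : ℂ, Polynomial.aeval z (minpoly ℚ α) = 0 → z ≠ (α : ℂ) →
      ‖z‖ < 1) :
    ∃ n₀ : ℕ, 0 < n₀ ∧ ∀ n : ℕ, n₀ ≤ n → m ∣ n →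
      distToNearestInt (α ^ n) = (|v| : ℝ) ^ (n / m) * α ^ (-(n : ℤ)) :=
  pisot_from_quadratic_fractional_parts_general m hm α hα1 u v hminpoly hdeg hconj
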